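/- Let P be a pre-Garside structure such that all elements of P have a common right multiple Δ ∈ P (a right lcm of P). Then there is a monoid automorphism x ↦ x̄ of M(P) mapping the set of atoms S to itself and satisfying xΔ = Δx̄ for all x; moreover Δ is also the left lcm of P. -/

import Mathlib

/-- An atomic partial product on a set `P`: a partial product (with values in
`Option P`) with a unit, associativity, a finite set of atoms, and an `ℕ`-grading. -/
structure AtomicPartialProduct (P : Type*) where
  mul : P → P → Option P
  one : P
  one_mul : ∀ a, mul one a = some a
  mul_one : ∀ a, mul a one = some a
  /-- `ab` and `(ab)c` are defined iff `bc` and `a(bc)` are defined. -/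
  assoc_defined : ∀ a b c : P,
    (∃ ab, mul a b = some ab ∧ (mul ab c).isSome) ↔
    (∃ bc, mul b c = some bc ∧ (mul a bc).isSome)
  /-- When both are defined, `(ab)c = a(bc)`. -/
  assoc : ∀ a b c ab bc x y : P, mul a b = some ab → mul b c = some bc →
    mul ab c = some x → mul a bc = some y → x = y
  /-- The product of two non-unit elements is a non-unit. -/
  ne_one_mul : ∀ a b c : P, a ≠ one → b ≠ one → mul a b = some c → c ≠ one
  /-- There are finitely many atoms. -/
  atoms_finite : {p : P | p ≠ one ∧ ∀ a b, a ≠ one → b ≠ one → mul a b ≠ some p}.Finite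
  len : P → ℕ
  len_pos : ∀ p, p ≠ one → 0 < len p
  len_mul : ∀ a b c, mul a b = some c → len c = len a + len b

namespace AtomicPartialProduct

variable {P : Type*} (S : AtomicPartialProduct P)

/-- The set of atoms: non-unit elements which are not products of non-units. -/
def atoms : Set P :=
  {p : P | p ≠ S.one ∧ ∀ a b, a ≠ S.one → b ≠ S.one → S.mul a b ≠ some p}

/-- The defining relations of the monoid `M(P)`: `a · b = c` whenever the partial
product `ab` is defined and equal to `c`. -/
def rel : FreeMonoid P → FreeMonoid P → Prop := fun u v =>
  ∃ a b c : P, S.mul a b = some c ∧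
    u = FreeMonoid.of a * FreeMonoid.of b ∧ v = FreeMonoid.of c

/-- The monoid `M(P)` presented by generators `P` and relations `ab = c` whenever
the partial product is defined. -/
def M := (conGen S.rel).Quotient

instance : Monoid S.M := inferInstanceAs (Monoid (conGen S.rel).Quotient)

/-- The natural map `P → M(P)`. -/
def ι (p : P) : S.M := (conGen S.rel).mk' (FreeMonoid.of p)

/-- `a` left-divides `c` in `P`. -/
def leftDvd (a c : P) : Prop := ∃ b, S.mul a b = some c

/-- `a` right-divides `c` in `P`. -/
def rightDvd (a c : P) : Prop := ∃ b, S.mul b a = some c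

/-- `Δ` is a least common right multiple of `s` and `t` in `P`. -/
def IsRightLcm (s t Δ : P) : Prop :=
  S.leftDvd s Δ ∧ S.leftDvd t Δ ∧ ∀ m, S.leftDvd s m → S.leftDvd t m → S.leftDvd Δ m

/-- `Δ` is a least common left multiple of `s` and `t` in `P`. -/
def IsLeftLcm (s t Δ : P) : Prop :=
  S.rightDvd s Δ ∧ S.rightDvd t Δ ∧ ∀ m, S.rightDvd s m → S.rightDvd t m → S.rightDvd Δ m

end AtomicPartialProduct

/-- A pre-Garside structure: an atomic partial product satisfying the lcm axioms
(iv), (iv'), the closure axiom (v) and the cancellativity axiom (vi). -/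
structure PreGarside (P : Type*) extends AtomicPartialProduct P where
  /-- (iv) two atoms with a common right multiple have a right lcm. -/
  lcm_right : ∀ s ∈ toAtomicPartialProduct.atoms, ∀ t ∈ toAtomicPartialProduct.atoms,
    (∃ m, toAtomicPartialProduct.leftDvd s m ∧ toAtomicPartialProduct.leftDvd t m) →
    ∃ Δ, toAtomicPartialProduct.IsRightLcm s t Δ
  /-- (iv') two atoms with a common left multiple have a left lcm. -/
  lcm_left : ∀ s ∈ toAtomicPartialProduct.atoms, ∀ t ∈ toAtomicPartialProduct.atoms,
    (∃ m, toAtomicPartialProduct.rightDvd s m ∧ toAtomicPartialProduct.rightDvd t m) →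
    ∃ Δ, toAtomicPartialProduct.IsLeftLcm s t Δ
  /-- (v) if `as` and `at` are defined then so is `aΔ_{s,t}`. -/
  mul_lcm_defined : ∀ s ∈ toAtomicPartialProduct.atoms, ∀ t ∈ toAtomicPartialProduct.atoms,
    ∀ Δ a : P, toAtomicPartialProduct.IsRightLcm s t Δ →
    (toAtomicPartialProduct.mul a s).isSome → (toAtomicPartialProduct.mul a t).isSome →
    (toAtomicPartialProduct.mul a Δ).isSome
  /-- (vi) elements of `P` are cancellable in `M(P)` (right cancellation). -/
  cancel_right : ∀ (m : toAtomicPartialProduct.M) (a b : P),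
    toAtomicPartialProduct.ι a * m = toAtomicPartialProduct.ι b * m → a = b
  /-- (vi) elements of `P` are cancellable in `M(P)` (left cancellation). -/
  cancel_left : ∀ (m : toAtomicPartialProduct.M) (a b : P),
    m * toAtomicPartialProduct.ι a = m * toAtomicPartialProduct.ι b → a = b


namespace GarsideAux

open AtomicPartialProduct

variable {P : Type*} {G : PreGarside P}

private abbrev Ap (G : PreGarside P) : AtomicPartialProduct P := G.toAtomicPartialProduct

private theorem iota_mul {a b c : P} (h : (Ap G).mul a b = some c) :
    (Ap G).ι a * (Ap G).ι b = (Ap G).ι c := by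
  have hrel : conGen (Ap G).rel (FreeMonoid.of a * FreeMonoid.of b) (FreeMonoid.of c) :=
    ConGen.Rel.of _ _ ⟨a, b, c, h, rfl, rfl⟩
  show (conGen (Ap G).rel).mk' (FreeMonoid.of a) * (conGen (Ap G).rel).mk' (FreeMonoid.of b) =
    (conGen (Ap G).rel).mk' (FreeMonoid.of c)
  rw [← map_mul]
  exact (Con.eq _).mpr hrel

private theorem comp_unique_left {a b b' z : P} (h1 : (Ap G).mul a b = some z)
    (h2 : (Ap G).mul a b' = some z) : b = b' := by
  apply G.cancel_left ((Ap G).ι a)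
  rw [iota_mul h1, iota_mul h2]

private theorem comp_unique_right {a a' b z : P} (h1 : (Ap G).mul a b = some z)
    (h2 : (Ap G).mul a' b = some z) : a = a' := by
  apply G.cancel_right ((Ap G).ι b)
  rw [iota_mul h1, iota_mul h2]

variable {Δ : P}

private noncomputable def dd (hΔ : ∀ a : P, (Ap G).leftDvd a Δ) (a : P) : P := (hΔ a).choose

private theorem dd_spec (hΔ : ∀ a : P, (Ap G).leftDvd a Δ) (a : P) :
    (Ap G).mul a (dd hΔ a) = some Δ := (hΔ a).choose_spec

private theorem dd_rule (hΔ : ∀ a : P, (Ap G).leftDvd a Δ) {x y z : P}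
    (h : (Ap G).mul x y = some z) : (Ap G).mul y (dd hΔ z) = some (dd hΔ x) := by
  have h2 := dd_spec hΔ z
  obtain ⟨w, hw, hs⟩ := ((Ap G).assoc_defined x y (dd hΔ z)).mp
    ⟨z, h, by rw [h2]; rfl⟩
  obtain ⟨e, he⟩ := Option.isSome_iff_exists.mp hs
  have hΔe : Δ = e := (Ap G).assoc x y (dd hΔ z) z w Δ e h hw h2 he
  have : w = dd hΔ x := comp_unique_left (hΔe ▸ he) (dd_spec hΔ x)
  rwa [this] at hw

private theorem dd_one (hΔ : ∀ a : P, (Ap G).leftDvd a Δ) : dd hΔ (Ap G).one = Δ :=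
  (comp_unique_left (dd_spec hΔ (Ap G).one) ((Ap G).one_mul Δ))

private theorem dd_delta (hΔ : ∀ a : P, (Ap G).leftDvd a Δ) : dd hΔ Δ = (Ap G).one :=
  (comp_unique_left (dd_spec hΔ Δ) ((Ap G).mul_one Δ))

private theorem dd_inj (hΔ : ∀ a : P, (Ap G).leftDvd a Δ) :
    Function.Injective (dd hΔ) := by
  intro a a' h
  exact comp_unique_right (dd_spec hΔ a) (h ▸ dd_spec hΔ a')

private noncomputable def bb (hΔ : ∀ a : P, (Ap G).leftDvd a Δ) (a : P) : P := dd hΔ (dd hΔ a)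

private theorem bb_rel (hΔ : ∀ a : P, (Ap G).leftDvd a Δ) {a b c : P}
    (h : (Ap G).mul a b = some c) : (Ap G).mul (bb hΔ a) (bb hΔ b) = some (bb hΔ c) := by
  have r1 := dd_rule hΔ h
  have r2 := dd_rule hΔ r1
  have r3 := dd_rule hΔ r2
  exact r3

private theorem bb_one (hΔ : ∀ a : P, (Ap G).leftDvd a Δ) : bb hΔ (Ap G).one = (Ap G).one := by
  unfold bb
  rw [dd_one hΔ, dd_delta hΔ]

private theorem len_one : (Ap G).len (Ap G).one = 0 := by
  have := (Ap G).len_mul _ _ _ ((Ap G).one_mul (Ap G).one)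
  omega

private theorem exists_atom_factor :
    ∀ n (p : P), (Ap G).len p ≤ n → p ≠ (Ap G).one →
      ∃ s ∈ (Ap G).atoms, ∃ q, (Ap G).mul s q = some p ∧ (Ap G).len q < (Ap G).len p := by
  intro n
  induction n with
  | zero =>
    intro p hp hne
    exact absurd hp (by have := (Ap G).len_pos p hne; omega)
  | succ n ih =>
    intro p hp hne
    by_cases hat : p ∈ (Ap G).atoms
    · refine ⟨p, hat, (Ap G).one, (Ap G).mul_one p, ?_⟩
      rw [len_one]
      exact (Ap G).len_pos p hne
    · have hfac : ∃ a b, a ≠ (Ap G).one ∧ b ≠ (Ap G).one ∧ (Ap G).mul a b = some p := by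
        by_contra hc
        push_neg at hc
        exact hat ⟨hne, fun a b h1 h2 h3 => (hc a b h1 h2 h3).elim⟩
      obtain ⟨a, b, ha, hb, hab⟩ := hfac
      have hlab := (Ap G).len_mul a b p hab
      have hbpos := (Ap G).len_pos b hb
      obtain ⟨s, hs, q', hsq', hq'⟩ := ih a (by omega) ha
      obtain ⟨q'', hq'', hs2⟩ := ((Ap G).assoc_defined s q' b).mp
        ⟨a, hsq', by rw [hab]; rfl⟩
      obtain ⟨e, he⟩ := Option.isSome_iff_exists.mp hs2
      have hpe : p = e := (Ap G).assoc s q' b a q'' p e hsq' hq'' hab he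
      have hlq'' := (Ap G).len_mul q' b q'' hq''
      exact ⟨s, hs, q'', hpe ▸ he, by omega⟩

private theorem finite_len_le : ∀ n, {p : P | (Ap G).len p ≤ n}.Finite := by
  intro n
  induction n with
  | zero =>
    apply Set.Finite.subset (Set.finite_singleton (Ap G).one)
    intro p hp
    simp only [Set.mem_setOf_eq] at hp
    by_contra hne
    have := (Ap G).len_pos p (by simpa using hne)
    omega
  | succ n ih =>
    have himg : ((fun sq : P × P => ((Ap G).mul sq.1 sq.2).getD (Ap G).one) ''
        ((Ap G).atoms ×ˢ {p : P | (Ap G).len p ≤ n})).Finite :=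
      ((Ap G).atoms_finite.prod ih).image _
    apply Set.Finite.subset (himg.insert (Ap G).one)
    intro p hp
    by_cases hp1 : p = (Ap G).one
    · exact hp1 ▸ Set.mem_insert _ _
    · obtain ⟨s, hs, q, hm, hlt⟩ := exists_atom_factor (n + 1) p hp hp1
      refine Set.mem_insert_of_mem _ ⟨(s, q), ⟨hs, ?_⟩, ?_⟩
      · simp only [Set.mem_setOf_eq]
        have : (Ap G).len p ≤ n + 1 := hp
        omega
      · simp [hm]

private theorem finiteP (hΔ : ∀ a : P, (Ap G).leftDvd a Δ) : Finite P := by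
  rw [← Set.finite_univ_iff]
  apply Set.Finite.subset (finite_len_le (G := G) ((Ap G).len Δ))
  intro p _
  have := (Ap G).len_mul p (dd hΔ p) Δ (dd_spec hΔ p)
  simp only [Set.mem_setOf_eq]
  omega

private theorem dd_bij (hΔ : ∀ a : P, (Ap G).leftDvd a Δ) : Function.Bijective (dd hΔ) := by
  have : Finite P := finiteP hΔ
  exact Finite.injective_iff_bijective.mp (dd_inj hΔ)

private noncomputable def barPerm (hΔ : ∀ a : P, (Ap G).leftDvd a Δ) : Equiv.Perm P :=
  (Equiv.ofBijective (dd hΔ) (dd_bij hΔ)).trans (Equiv.ofBijective (dd hΔ) (dd_bij hΔ))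

private theorem barPerm_apply (hΔ : ∀ a : P, (Ap G).leftDvd a Δ) (a : P) :
    barPerm hΔ a = bb hΔ a := rfl

private theorem bb_rel_iter (hΔ : ∀ a : P, (Ap G).leftDvd a Δ) (k : ℕ) :
    ∀ {a b c : P}, (Ap G).mul a b = some c →
      (Ap G).mul ((bb hΔ)^[k] a) ((bb hΔ)^[k] b) = some ((bb hΔ)^[k] c) := by
  induction k with
  | zero => intro a b c h; exact h
  | succ k ih =>
    intro a b c h
    rw [Function.iterate_succ_apply', Function.iterate_succ_apply',
      Function.iterate_succ_apply']
    exact bb_rel hΔ (ih h)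

private theorem barPerm_pow_apply (hΔ : ∀ a : P, (Ap G).leftDvd a Δ) (k : ℕ) (a : P) :
    (barPerm hΔ ^ k) a = (bb hΔ)^[k] a := by
  induction k generalizing a with
  | zero => rfl
  | succ k ih =>
    rw [pow_succ', Equiv.Perm.mul_apply, ih, Function.iterate_succ_apply']
    exact barPerm_apply hΔ _

private theorem barInv_rel (hΔ : ∀ a : P, (Ap G).leftDvd a Δ) {a b c : P}
    (h : (Ap G).mul a b = some c) :
    (Ap G).mul ((barPerm hΔ).symm a) ((barPerm hΔ).symm b) = some ((barPerm hΔ).symm c) := by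
  have : Finite P := finiteP hΔ
  set p := barPerm hΔ with hp
  have hn : p ^ orderOf p = 1 := pow_orderOf_eq_one p
  have hpos : 0 < orderOf p := orderOf_pos p
  have hinv : p ^ (orderOf p - 1) = p⁻¹ := by
    apply eq_inv_of_mul_eq_one_left
    rw [← pow_succ, Nat.sub_add_cancel hpos, hn]
  have hsymm : ∀ x : P, p.symm x = (bb hΔ)^[orderOf p - 1] x := by
    intro x
    rw [← Equiv.Perm.inv_def, ← hinv, barPerm_pow_apply]
  rw [hsymm, hsymm, hsymm]
  exact bb_rel_iter hΔ _ h

private theorem barInv_one (hΔ : ∀ a : P, (Ap G).leftDvd a Δ) :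
    (barPerm hΔ).symm (Ap G).one = (Ap G).one := by
  rw [Equiv.symm_apply_eq, barPerm_apply, bb_one hΔ]

private noncomputable def phiHom (hΔ : ∀ a : P, (Ap G).leftDvd a Δ) :
    (Ap G).M →* (Ap G).M :=
  Con.lift _ (FreeMonoid.lift fun a => (Ap G).ι (bb hΔ a)) (Con.conGen_le.mpr (by
    rintro u v ⟨a, b, c, habc, rfl, rfl⟩
    rw [Con.ker_rel, map_mul, FreeMonoid.lift_eval_of, FreeMonoid.lift_eval_of,
      FreeMonoid.lift_eval_of]
    exact iota_mul (bb_rel hΔ habc)))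

private noncomputable def psiHom (hΔ : ∀ a : P, (Ap G).leftDvd a Δ) :
    (Ap G).M →* (Ap G).M :=
  Con.lift _ (FreeMonoid.lift fun a => (Ap G).ι ((barPerm hΔ).symm a)) (Con.conGen_le.mpr (by
    rintro u v ⟨a, b, c, habc, rfl, rfl⟩
    rw [Con.ker_rel, map_mul, FreeMonoid.lift_eval_of, FreeMonoid.lift_eval_of,
      FreeMonoid.lift_eval_of]
    exact iota_mul (barInv_rel hΔ habc)))

private theorem phiHom_iota (hΔ : ∀ a : P, (Ap G).leftDvd a Δ) (a : P) :
    phiHom hΔ ((Ap G).ι a) = (Ap G).ι (bb hΔ a) :=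
  Con.lift_mk' _ _

private theorem psiHom_iota (hΔ : ∀ a : P, (Ap G).leftDvd a Δ) (a : P) :
    psiHom hΔ ((Ap G).ι a) = (Ap G).ι ((barPerm hΔ).symm a) :=
  Con.lift_mk' _ _

private theorem hom_ext {N : Type*} [Monoid N] {f g : (Ap G).M →* N}
    (h : ∀ a : P, f ((Ap G).ι a) = g ((Ap G).ι a)) : f = g := by
  have key : f.comp (Con.mk' (conGen (Ap G).rel)) = g.comp (Con.mk' (conGen (Ap G).rel)) :=
    FreeMonoid.hom_eq h
  ext x
  obtain ⟨w, rfl⟩ := Con.mk'_surjective (c := conGen (Ap G).rel) x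
  exact DFunLike.congr_fun key w

private noncomputable def phiEquiv (hΔ : ∀ a : P, (Ap G).leftDvd a Δ) :
    (Ap G).M ≃* (Ap G).M where
  toFun := phiHom hΔ
  invFun := psiHom hΔ
  left_inv x := by
    have key : (psiHom hΔ).comp (phiHom hΔ) = MonoidHom.id _ := by
      apply hom_ext
      intro a
      rw [MonoidHom.comp_apply, phiHom_iota, psiHom_iota, MonoidHom.id_apply]
      congr 1
      rw [← barPerm_apply hΔ]
      exact (barPerm hΔ).symm_apply_apply a
    exact DFunLike.congr_fun key x
  right_inv x := by
    have key : (phiHom hΔ).comp (psiHom hΔ) = MonoidHom.id _ := by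
      apply hom_ext
      intro a
      rw [MonoidHom.comp_apply, psiHom_iota, phiHom_iota, MonoidHom.id_apply]
      congr 1
      rw [← barPerm_apply hΔ]
      exact (barPerm hΔ).apply_symm_apply a
    exact DFunLike.congr_fun key x
  map_mul' := map_mul _

private theorem iota_conj (hΔ : ∀ a : P, (Ap G).leftDvd a Δ) (b : P) :
    (Ap G).ι b * (Ap G).ι Δ = (Ap G).ι Δ * (Ap G).ι (bb hΔ b) := by
  have h1 := iota_mul (dd_spec hΔ b)
  have h2 := iota_mul (dd_spec hΔ (dd hΔ b))
  have hbb : bb hΔ b = dd hΔ (dd hΔ b) := rfl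
  rw [hbb]
  calc (Ap G).ι b * (Ap G).ι Δ
      = (Ap G).ι b * ((Ap G).ι (dd hΔ b) * (Ap G).ι (dd hΔ (dd hΔ b))) := by rw [h2]
    _ = ((Ap G).ι b * (Ap G).ι (dd hΔ b)) * (Ap G).ι (dd hΔ (dd hΔ b)) := (mul_assoc _ _ _).symm
    _ = (Ap G).ι Δ * (Ap G).ι (dd hΔ (dd hΔ b)) := by rw [h1]

end GarsideAux

/-- If all elements of `P` have a common right multiple `Δ ∈ P`, then there is an
automorphism `x ↦ x̄` of `M(P)` mapping the atoms to themselves with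
`xΔ = Δx̄`, and `Δ` is also the left lcm of `P`. -/
theorem conj_automorphism_of_delta {P : Type*} (G : PreGarside P) (Δ : P)
    (hΔ : ∀ a : P, G.toAtomicPartialProduct.leftDvd a Δ) :
    (∃ φ : G.toAtomicPartialProduct.M ≃* G.toAtomicPartialProduct.M,
      (∀ s ∈ G.toAtomicPartialProduct.atoms, ∃ t ∈ G.toAtomicPartialProduct.atoms,
        φ (G.toAtomicPartialProduct.ι s) = G.toAtomicPartialProduct.ι t) ∧
      ∀ x : G.toAtomicPartialProduct.M,
        x * G.toAtomicPartialProduct.ι Δ = G.toAtomicPartialProduct.ι Δ * φ x) ∧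
    (∀ a : P, G.toAtomicPartialProduct.rightDvd a Δ) ∧
    (∀ m : G.toAtomicPartialProduct.M,
      (∀ a : P, ∃ y : G.toAtomicPartialProduct.M, m = y * G.toAtomicPartialProduct.ι a) →
      ∃ y : G.toAtomicPartialProduct.M, m = y * G.toAtomicPartialProduct.ι Δ) := by
  classical
  refine ⟨⟨GarsideAux.phiEquiv hΔ, ?_, ?_⟩, ?_, fun m h => h Δ⟩
  · intro s hs
    refine ⟨GarsideAux.bb hΔ s, ⟨?_, ?_⟩, GarsideAux.phiHom_iota hΔ s⟩
    · intro hone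
      have : s = G.toAtomicPartialProduct.one := by
        have hb1 : GarsideAux.barPerm hΔ s = GarsideAux.barPerm hΔ G.toAtomicPartialProduct.one := by
          rw [GarsideAux.barPerm_apply, GarsideAux.barPerm_apply, GarsideAux.bb_one hΔ, hone]
        exact (GarsideAux.barPerm hΔ).injective hb1
      exact hs.1 this
    · intro a b ha hb hab
      have hinv := GarsideAux.barInv_rel hΔ hab
      have hss : (GarsideAux.barPerm hΔ).symm (GarsideAux.bb hΔ s) = s := by
        rw [← GarsideAux.barPerm_apply hΔ]
        exact (GarsideAux.barPerm hΔ).symm_apply_apply s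
      rw [hss] at hinv
      refine hs.2 ((GarsideAux.barPerm hΔ).symm a) ((GarsideAux.barPerm hΔ).symm b) ?_ ?_ hinv
      · intro h1
        apply ha
        have := congrArg (GarsideAux.barPerm hΔ) h1
        rw [(GarsideAux.barPerm hΔ).apply_symm_apply] at this
        rw [this, GarsideAux.barPerm_apply, GarsideAux.bb_one hΔ]
      · intro h1
        apply hb
        have := congrArg (GarsideAux.barPerm hΔ) h1
        rw [(GarsideAux.barPerm hΔ).apply_symm_apply] at this
        rw [this, GarsideAux.barPerm_apply, GarsideAux.bb_one hΔ]
  · intro x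
    have hphi : ∀ y : G.toAtomicPartialProduct.M,
        GarsideAux.phiEquiv hΔ y = GarsideAux.phiHom hΔ y := fun _ => rfl
    obtain ⟨w, rfl⟩ := Con.mk'_surjective (c := conGen G.toAtomicPartialProduct.rel) x
    induction w using FreeMonoid.inductionOn' with
    | one =>
      rw [map_one]
      show (1 : G.toAtomicPartialProduct.M) * _ = _ * GarsideAux.phiEquiv hΔ 1
      rw [one_mul, hphi, map_one, mul_one]
    | of_mul b w ih =>
      rw [map_mul]
      have hb : (Con.mk' (conGen G.toAtomicPartialProduct.rel)) (FreeMonoid.of b) =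
          G.toAtomicPartialProduct.ι b := rfl
      rw [hb]
      change @id G.toAtomicPartialProduct.M ((conGen G.toAtomicPartialProduct.rel).mk' w) * G.toAtomicPartialProduct.ι Δ = G.toAtomicPartialProduct.ι Δ * GarsideAux.phiEquiv hΔ (@id G.toAtomicPartialProduct.M ((conGen G.toAtomicPartialProduct.rel).mk' w)) at ih
      show G.toAtomicPartialProduct.ι b * @id G.toAtomicPartialProduct.M ((conGen G.toAtomicPartialProduct.rel).mk' w) * G.toAtomicPartialProduct.ι Δ = G.toAtomicPartialProduct.ι Δ * GarsideAux.phiEquiv hΔ (G.toAtomicPartialProduct.ι b * @id G.toAtomicPartialProduct.M ((conGen G.toAtomicPartialProduct.rel).mk' w))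
      rw [mul_assoc, ih]
      simp only [hphi]
      rw [← mul_assoc, GarsideAux.iota_conj hΔ b, mul_assoc, map_mul,
        GarsideAux.phiHom_iota hΔ b]
  · intro a
    obtain ⟨b, hb⟩ := (GarsideAux.dd_bij hΔ).2 a
    exact ⟨b, hb ▸ GarsideAux.dd_spec hΔ b⟩
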